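/- arXiv:2002.08261 — 2 statements merged into one kernel-verified Lean document; each statement's English description precedes it below -/
import Mathlib

section
/- Let A be a Banach algebra containing no isomorphic copy of ℓ¹. If f ∈ A* is such that T_f maps weakly precompact sets onto L-sets, then T_f is a compact operator. -/
/-!
By Rosenthal's ℓ¹ theorem, every bounded sequence in `A` has a weakly Cauchy subsequence. For
`r < s`, the Nash-Williams dichotomy for families of finite subsets of `ℕ` yields an infinite set
of indices along which either every finite set carries a unit functional lying alternately below
`r` and above `s` (then, after padding to adjust parities, every sign pattern is realised on a
subsequence, which is therefore equivalent to the unit vector basis of `ℓ¹`), or no unit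
functional crosses `(r, s)` infinitely often. Diagonalising over rational pairs gives a
subsequence along which every functional converges.

Next, `T_f` is completely continuous. If `x n` is weakly null but `‖T_f (x n)‖ ≥ ε`, choose unit
vectors `y n` with `|f (x n * y n)| > ε / 2` and make them weakly Cauchy. In
`f (x n * y n) = f (x n * (y n - y N)) + f (x n * y N)` the first term is small uniformly in `n`
because `T_f (range x)` is an L-set, and the second tends to `0` because `x` is weakly null.
Finally, a completely continuous operator maps weakly Cauchy sequences to Cauchy sequences, hence
the unit ball to a totally bounded set.
-/

open Filter Topology ENNReal

/-- A sequence is weakly null if `f (x n) → 0` for every continuous linear functional `f`. -/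
def WeaklyNull {A : Type*} [NormedAddCommGroup A] [NormedSpace ℝ A] (x : ℕ → A) : Prop :=
  ∀ f : A →L[ℝ] ℝ, Tendsto (fun n => f (x n)) atTop (𝓝 0)

/-- A sequence is weakly Cauchy if `f (x n)` converges for every continuous linear functional. -/
def WeaklyCauchy {A : Type*} [NormedAddCommGroup A] [NormedSpace ℝ A] (x : ℕ → A) : Prop :=
  ∀ f : A →L[ℝ] ℝ, ∃ L : ℝ, Tendsto (fun n => f (x n)) atTop (𝓝 L)

/-- `E ⊆ A*` is an L-set: `sup_{f ∈ E} |f (x n)| → 0` for every weakly null `x`. -/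
def LSet {A : Type*} [NormedAddCommGroup A] [NormedSpace ℝ A] (E : Set (A →L[ℝ] ℝ)) : Prop :=
  ∀ x : ℕ → A, WeaklyNull x → ∀ ε > (0 : ℝ), ∃ N : ℕ, ∀ n ≥ N, ∀ f ∈ E, |f (x n)| < ε

/-- A set is weakly precompact if every sequence in it has a weakly Cauchy subsequence. -/
def WeaklyPrecompact {A : Type*} [NormedAddCommGroup A] [NormedSpace ℝ A] (K : Set A) : Prop :=
  ∀ x : ℕ → A, (∀ n, x n ∈ K) → ∃ φ : ℕ → ℕ, StrictMono φ ∧ WeaklyCauchy (x ∘ φ)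

/-- A map is completely continuous if it sends weakly null sequences to norm null sequences. -/
def CompletelyContinuous {A B : Type*} [NormedAddCommGroup A] [NormedSpace ℝ A]
    [NormedAddCommGroup B] (T : A → B) : Prop :=
  ∀ x : ℕ → A, WeaklyNull x → Tendsto (fun n => ‖T (x n)‖) atTop (𝓝 0)

/-- The multiplication operator `T_f : A → A*`, `(T_f a) x = f (a * x)`. -/
noncomputable def Tf {A : Type*} [NormedRing A] [NormedAlgebra ℝ A]
    (f : A →L[ℝ] ℝ) (a : A) : A →L[ℝ] ℝ :=
  f.comp (ContinuousLinearMap.mul ℝ A a)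

/-- The multiplication operator `S_f : A → A*`, `(S_f a) x = f (x * a)`. -/
noncomputable def Sf {A : Type*} [NormedRing A] [NormedAlgebra ℝ A]
    (f : A →L[ℝ] ℝ) (a : A) : A →L[ℝ] ℝ :=
  f.comp ((ContinuousLinearMap.mul ℝ A).flip a)

/-- `w` is an ℓ¹-sequence: equivalent to the unit vector basis of ℓ¹. -/
def IsL1Sequence {A : Type*} [NormedAddCommGroup A] [NormedSpace ℝ A] (w : ℕ → A) : Prop :=
  ∃ c C : ℝ, 0 < c ∧ ∀ (s : Finset ℕ) (lam : ℕ → ℝ),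
    c * ∑ n ∈ s, |lam n| ≤ ‖∑ n ∈ s, lam n • w n‖ ∧
      ‖∑ n ∈ s, lam n • w n‖ ≤ C * ∑ n ∈ s, |lam n|

/-- The Schur property: weakly convergent sequences are norm convergent. -/
def SchurProperty (A : Type*) [NormedAddCommGroup A] [NormedSpace ℝ A] : Prop :=
  ∀ (x : ℕ → A) (L : A),
    (∀ f : A →L[ℝ] ℝ, Tendsto (fun n => f (x n)) atTop (𝓝 (f L))) →
      Tendsto x atTop (𝓝 L)


open Set Filter Topology
open scoped Finset

lemma Set.Infinite.inter_Ioi {α : Type*} [LinearOrder α] [LocallyFiniteOrderBot α] {X : Set α}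
    (hX : X.Infinite) (a : α) : (X ∩ Ioi a).Infinite :=
  (hX.sdiff (finite_Iic a)).mono fun _ hx => ⟨hx.1, not_le.1 hx.2⟩

namespace NashWilliams

variable (𝓑 : Finset ℕ → Prop)

def IsInitialSegment (F : Finset ℕ) (M : Set ℕ) : Prop :=
  ↑F ⊆ M ∧ ∀ m ∈ M, m ∉ F → ∀ a ∈ F, a < m

def HasInitialSegmentIn (M : Set ℕ) : Prop :=
  ∃ F, IsInitialSegment F M ∧ 𝓑 F

-- Acceptance and rejection as in Galvin and Prikry's proof of the Nash-Williams theorem.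
def Accepts (X : Set ℕ) (F : Finset ℕ) : Prop :=
  ∀ Y ⊆ X, Y.Infinite → HasInitialSegmentIn 𝓑 (↑F ∪ Y)

def Rejects (X : Set ℕ) (F : Finset ℕ) : Prop :=
  ∀ Y ⊆ X, Y.Infinite → ¬ Accepts 𝓑 Y F

-- A Mathias condition: a finite stem `G` below an infinite reservoir `R`.
def IsRejectingCondition (G : Finset ℕ) (R : Set ℕ) : Prop :=
  R.Infinite ∧ (∀ a ∈ G, ∀ r ∈ R, a < r) ∧ ∀ F ⊆ G, Rejects 𝓑 R F

variable {𝓑}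

lemma IsInitialSegment.card_filter_lt {v : ℕ → ℕ} (hv : StrictMono v) {F : Finset ℕ}
    (hF : IsInitialSegment F (range v)) {i : ℕ} (hi : v i ∈ F) : #{b ∈ F | b < v i} = i := by
  have : {b ∈ F | b < v i} = (Finset.range i).image v := by
    ext b
    simp only [Finset.mem_filter, Finset.mem_image, Finset.mem_range]
    constructor
    · rintro ⟨hbF, hb⟩
      obtain ⟨j, rfl⟩ := hF.1 hbF
      exact ⟨j, hv.lt_iff_lt.1 hb, rfl⟩
    · rintro ⟨j, hj, rfl⟩
      refine ⟨by_contra fun hjF => ?_, hv hj⟩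
      exact (hF.2 _ ⟨j, rfl⟩ hjF _ hi).not_gt (hv hj)
  rw [this, Finset.card_image_of_injective _ hv.injective, Finset.card_range]

lemma exists_infinite_isInitialSegment {F : Finset ℕ} {M : Set ℕ} (hFM : ↑F ⊆ M)
    (hM : M.Infinite) : ∃ N ⊆ M, N.Infinite ∧ IsInitialSegment F N := by
  refine ⟨↑F ∪ M ∩ Ioi (F.sup id), union_subset hFM inter_subset_left,
    (hM.inter_Ioi _).mono subset_union_right, subset_union_left, ?_⟩
  rintro m (hm | hm) hmF a ha
  · exact absurd hm hmF
  · exact (Finset.le_sup (f := id) ha).trans_lt hm.2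

lemma Accepts.mono {X Y : Set ℕ} {F : Finset ℕ} (h : Accepts 𝓑 X F) (hYX : Y ⊆ X) :
    Accepts 𝓑 Y F :=
  fun Z hZ => h Z (hZ.trans hYX)

lemma Rejects.mono {X Y : Set ℕ} {F : Finset ℕ} (h : Rejects 𝓑 X F) (hYX : Y ⊆ X) :
    Rejects 𝓑 Y F :=
  fun Z hZ => h Z (hZ.trans hYX)

lemma accepts_of_mem {F : Finset ℕ} {X : Set ℕ} (hF : 𝓑 F) (hFX : ∀ a ∈ F, ∀ x ∈ X, a < x) :
    Accepts 𝓑 X F := by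
  refine fun Y hYX _ => ⟨F, ⟨subset_union_left, ?_⟩, hF⟩
  rintro m (hm | hm) hmF a ha
  · exact absurd hm hmF
  · exact hFX a ha m (hYX hm)

lemma accepts_of_forall_accepts_insert {X : Set ℕ} {F : Finset ℕ}
    (h : ∀ x ∈ X, Accepts 𝓑 (X ∩ Ioi x) (insert x F)) : Accepts 𝓑 X F := by
  intro W hWX hW
  have hw : sInf W ∈ W := Nat.sInf_mem hW.nonempty
  have hsub : W \ {sInf W} ⊆ X ∩ Ioi (sInf W) := fun v hv =>
    ⟨hWX hv.1, lt_of_le_of_ne (Nat.sInf_le hv.1) (Ne.symm hv.2)⟩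
  have := h _ (hWX hw) _ hsub (hW.sdiff (finite_singleton _))
  rwa [Finset.coe_insert, insert_union, ← union_insert, insert_sdiff_singleton,
    insert_eq_of_mem hw] at this

lemma Rejects.exists_forall_rejects_insert {X : Set ℕ} {F : Finset ℕ} (hX : X.Infinite)
    (hrej : Rejects 𝓑 X F) :
    ∃ X' ⊆ X, X'.Infinite ∧ ∀ x ∈ X', Rejects 𝓑 (X' ∩ Ioi x) (insert x F) := by
  by_contra! hcon
  have key : ∀ X' ⊆ X, X'.Infinite →
      ∃ x ∈ X', ∃ Y ⊆ X' ∩ Ioi x, Y.Infinite ∧ Accepts 𝓑 Y (insert x F) := by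
    intro X' hX' hinf
    obtain ⟨x, hx, hnr⟩ := hcon X' hX' hinf
    simp only [Rejects, not_forall, not_not] at hnr
    obtain ⟨Y, hY, hYinf, hacc⟩ := hnr
    exact ⟨x, hx, Y, hY, hYinf, hacc⟩
  -- iterating the witnesses yields an infinite subset of `X` that accepts `F`
  choose! pt hpt next hnext hnextinf hacc using key
  set S : ℕ → Set ℕ := fun n => next^[n] X
  have hS_succ : ∀ n, S (n + 1) = next (S n) := fun n => Function.iterate_succ_apply' _ _ _
  have hS : ∀ n, S n ⊆ X ∧ (S n).Infinite := by
    intro n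
    induction n with
    | zero => exact ⟨subset_rfl, hX⟩
    | succ n ih =>
      rw [hS_succ]
      exact ⟨(hnext _ ih.1 ih.2).trans (inter_subset_left.trans ih.1), hnextinf _ ih.1 ih.2⟩
  have hS_le : ∀ n, S (n + 1) ⊆ S n ∩ Ioi (pt (S n)) := fun n =>
    (hS_succ n).symm ▸ hnext _ (hS n).1 (hS n).2
  have hanti : Antitone S := antitone_nat_of_succ_le fun n => (hS_le n).trans inter_subset_left
  set p : ℕ → ℕ := fun n => pt (S n)
  have hp : ∀ n, p n ∈ S n := fun n => hpt _ (hS n).1 (hS n).2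
  have hmono : StrictMono p := strictMono_nat_of_lt_succ fun n => (hS_le n (hp (n + 1))).2
  refine hrej (range p) (range_subset_iff.2 fun n => (hS n).1 (hp n))
    (infinite_range_of_injective hmono.injective) (accepts_of_forall_accepts_insert ?_)
  rintro _ ⟨k, rfl⟩
  refine (hS_succ k ▸ hacc _ (hS k).1 (hS k).2).mono ?_
  rintro _ ⟨⟨m, rfl⟩, hm⟩
  exact hanti (hmono.lt_iff_lt.1 hm) (hp m)

lemma exists_forall_rejects_insert_of_finset (S : Finset (Finset ℕ)) {X : Set ℕ}
    (hX : X.Infinite) (h : ∀ F ∈ S, Rejects 𝓑 X F) :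
    ∃ X' ⊆ X, X'.Infinite ∧ ∀ F ∈ S, ∀ x ∈ X', Rejects 𝓑 (X' ∩ Ioi x) (insert x F) := by
  induction S using Finset.induction generalizing X with
  | empty => exact ⟨X, subset_rfl, hX, by simp⟩
  | @insert F₀ S _ ih =>
    obtain ⟨X₁, hX₁, hX₁inf, hS⟩ := ih hX fun F hF => h F (Finset.mem_insert_of_mem hF)
    obtain ⟨X₂, hX₂, hX₂inf, hF₀⟩ :=
      ((h F₀ (Finset.mem_insert_self _ _)).mono hX₁).exists_forall_rejects_insert hX₁inf
    refine ⟨X₂, hX₂.trans hX₁, hX₂inf, fun F hF x hx => ?_⟩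
    rcases Finset.mem_insert.1 hF with rfl | hF
    · exact hF₀ x hx
    · exact (hS F hF x (hX₂ hx)).mono (inter_subset_inter_left _ hX₂)

lemma IsRejectingCondition.exists_insert {G : Finset ℕ} {R : Set ℕ}
    (h : IsRejectingCondition 𝓑 G R) :
    ∃ y ∈ R, ∃ R' ⊆ R ∩ Ioi y, IsRejectingCondition 𝓑 (insert y G) R' := by
  obtain ⟨hR, hGR, hG⟩ := h
  obtain ⟨X, hXR, hXinf, hX⟩ := exists_forall_rejects_insert_of_finset G.powerset hR
    fun F hF => hG F (Finset.mem_powerset.1 hF)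
  obtain ⟨y, hy⟩ := hXinf.nonempty
  refine ⟨y, hXR hy, X ∩ Ioi y, inter_subset_inter_left _ hXR, hXinf.inter_Ioi y, ?_, ?_⟩
  · intro a ha r hr
    rcases Finset.mem_insert.1 ha with rfl | ha
    · exact hr.2
    · exact hGR a ha r (hXR hr.1)
  intro F hF
  by_cases hyF : y ∈ F
  · have := hX (F.erase y) (Finset.mem_powerset.2 fun a ha => ?_) y hy
    · rwa [Finset.insert_erase hyF] at this
    · exact (Finset.mem_insert.1 (hF (Finset.mem_of_mem_erase ha))).resolve_left
        (Finset.ne_of_mem_erase ha)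
  · exact (hG F fun a ha => (Finset.mem_insert.1 (hF ha)).resolve_left
      (ne_of_mem_of_not_mem ha hyF)).mono (inter_subset_left.trans hXR)

lemma exists_infinite_forall_not_of_rejects {X : Set ℕ} (hX : X.Infinite)
    (hr : Rejects 𝓑 X ∅) :
    ∃ M ⊆ X, M.Infinite ∧ ∀ N ⊆ M, N.Infinite → ¬ HasInitialSegmentIn 𝓑 N := by
  have step : ∀ p : Finset ℕ × Set ℕ, IsRejectingCondition 𝓑 p.1 p.2 →
      ∃ y ∈ p.2, ∃ R ⊆ p.2 ∩ Ioi y, IsRejectingCondition 𝓑 (insert y p.1) R :=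
    fun _ h => h.exists_insert
  choose! y hy R hR hRcond using step
  set q : ℕ → Finset ℕ × Set ℕ := fun n => (fun p => (insert (y p) p.1, R p))^[n] (∅, X)
  have hq_succ : ∀ n, q (n + 1) = (insert (y (q n)) (q n).1, R (q n)) := fun n =>
    Function.iterate_succ_apply' _ _ _
  have hq : ∀ n, (q n).2 ⊆ X ∧ IsRejectingCondition 𝓑 (q n).1 (q n).2 := by
    intro n
    induction n with
    | zero => exact ⟨subset_rfl, hX, by simp [q], fun F hF => by simp_all [q]⟩
    | succ n ih =>
      rw [hq_succ]
      exact ⟨((hR _ ih.2).trans inter_subset_left).trans ih.1, hRcond _ ih.2⟩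
  set ys : ℕ → ℕ := fun n => y (q n)
  have hys : ∀ n, ys n ∈ (q n).2 := fun n => hy _ (hq n).2
  have hmono : StrictMono ys := strictMono_nat_of_lt_succ fun n => by
    have := hys (n + 1)
    rw [hq_succ] at this
    exact (hR _ (hq n).2 this).2
  have hG : ∀ n, ∀ i < n, ys i ∈ (q n).1 := by
    intro n
    induction n with
    | zero => simp
    | succ n ih =>
      intro i hi
      rw [hq_succ]
      rcases Nat.lt_succ_iff_lt_or_eq.1 hi with hi | rfl
      · exact Finset.mem_insert_of_mem (ih i hi)
      · exact Finset.mem_insert_self _ _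
  refine ⟨range ys, range_subset_iff.2 fun n => (hq n).1 (hys n),
    infinite_range_of_injective hmono.injective, ?_⟩
  rintro N hN - ⟨F, hFN, hF⟩
  have hFq : F ⊆ (q (F.sup id + 1)).1 := by
    intro a ha
    obtain ⟨i, rfl⟩ := hN (hFN.1 ha)
    exact hG _ i (Nat.lt_succ_of_le ((hmono.id_le i).trans (Finset.le_sup (f := id) ha)))
  obtain ⟨hinf, hlt, hrej⟩ := (hq (F.sup id + 1)).2
  exact hrej F hFq _ subset_rfl hinf (accepts_of_mem hF fun a ha => hlt a (hFq ha))

theorem exists_infinite_forall_or_forall_not (𝓑 : Finset ℕ → Prop) {X : Set ℕ}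
    (hX : X.Infinite) :
    ∃ M ⊆ X, M.Infinite ∧ ((∀ N ⊆ M, N.Infinite → HasInitialSegmentIn 𝓑 N) ∨
      ∀ N ⊆ M, N.Infinite → ¬ HasInitialSegmentIn 𝓑 N) := by
  by_cases hr : Rejects 𝓑 X ∅
  · obtain ⟨M, hMX, hMinf, hM⟩ := exists_infinite_forall_not_of_rejects hX hr
    exact ⟨M, hMX, hMinf, Or.inr hM⟩
  · simp only [Rejects, not_forall, not_not] at hr
    obtain ⟨Y, hYX, hYinf, hY⟩ := hr
    exact ⟨Y, hYX, hYinf, Or.inl fun N hN hNinf => by simpa using hY N hN hNinf⟩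

end NashWilliams

lemma exists_superset_even_card_iff {u : ℕ → ℕ} (hu : StrictMono u) {F : Finset ℕ} {n : ℕ}
    (hF : ↑F ⊆ u '' Iio (2 * n)) (P : Prop) : ∃ G : Finset ℕ, F ⊆ G ∧
      G ⊆ insert (u (2 * n)) F ∧ ↑G ⊆ u '' Iio (2 * n + 1) ∧ (Even #G ↔ P) := by
  have hF' : ↑F ⊆ u '' Iio (2 * n + 1) := hF.trans (image_mono (Iio_subset_Iio (Nat.le_succ _)))
  by_cases hpar : Even #F ↔ P
  · exact ⟨F, subset_rfl, Finset.subset_insert _ _, hF', hpar⟩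
  have hn : u (2 * n) ∉ F := fun h => by
    obtain ⟨k, hk, hku⟩ := hF h
    exact (hk : k < 2 * n).ne (hu.injective hku)
  refine ⟨insert (u (2 * n)) F, Finset.subset_insert _ _, subset_rfl, ?_, ?_⟩
  · rw [Finset.coe_insert]
    exact insert_subset ⟨2 * n, Nat.lt_succ_self _, rfl⟩ hF'
  · rw [Finset.card_insert_of_notMem hn, Nat.even_add_one]
    tauto

lemma exists_finset_even_card_filter_lt_iff {u : ℕ → ℕ} (hu : StrictMono u) (p : ℕ → Prop)
    (n : ℕ) : ∃ F : Finset ℕ, ↑F ⊆ u '' Iio (2 * n) ∧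
      ∀ i < n, u (2 * i + 1) ∈ F ∧ (Even #{a ∈ F | a < u (2 * i + 1)} ↔ p i) := by
  induction n with
  | zero => exact ⟨∅, by simp, by simp⟩
  | succ n ih =>
    obtain ⟨F, hFu, hF⟩ := ih
    -- `u (2 * n)` pads `F` when needed, so that `u (2 * n + 1)` lands at a position of parity `p n`
    obtain ⟨G, hFG, hGF, hGu, hG⟩ := exists_superset_even_card_iff hu hFu (p n)
    have hG_lt : ∀ a ∈ G, a < u (2 * n + 1) := fun a ha => by
      obtain ⟨k, hk, rfl⟩ := hGu ha
      exact hu hk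
    refine ⟨insert (u (2 * n + 1)) G, ?_, fun i hi => ?_⟩
    · rw [Finset.coe_insert]
      exact insert_subset ⟨2 * n + 1, by simp; omega, rfl⟩
        (hGu.trans (image_mono (Iio_subset_Iio (by omega))))
    rcases Nat.lt_succ_iff_lt_or_eq.1 hi with hi | rfl
    · have hfilter : {a ∈ insert (u (2 * n + 1)) G | a < u (2 * i + 1)} =
          {a ∈ F | a < u (2 * i + 1)} := by
        ext a
        simp only [Finset.mem_filter, Finset.mem_insert]
        refine ⟨fun ⟨ha, hlt⟩ => ⟨?_, hlt⟩, fun ⟨ha, hlt⟩ => ⟨Or.inr (hFG ha), hlt⟩⟩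
        rcases ha with rfl | ha
        · exact absurd (hu.lt_iff_lt.1 hlt) (by omega)
        rcases Finset.mem_insert.1 (hGF ha) with rfl | ha
        · exact absurd (hu.lt_iff_lt.1 hlt) (by omega)
        · exact ha
      rw [hfilter]
      exact ⟨Finset.mem_insert_of_mem (hFG (hF i hi).1), (hF i hi).2⟩
    · have hfilter : {a ∈ insert (u (2 * i + 1)) G | a < u (2 * i + 1)} = G := by
        ext a
        simp only [Finset.mem_filter, Finset.mem_insert]
        exact ⟨fun ⟨h, hlt⟩ => h.resolve_left hlt.ne, fun ha => ⟨Or.inr ha, hG_lt a ha⟩⟩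
      rw [hfilter]
      exact ⟨Finset.mem_insert_self _ _, hG⟩

def CrossesInfinitelyOften (y : ℕ → ℝ) (M : Set ℕ) (r s : ℝ) : Prop :=
  {n ∈ M | y n < r}.Infinite ∧ {n ∈ M | s < y n}.Infinite

lemma CrossesInfinitelyOften.mono {y : ℕ → ℝ} {M N : Set ℕ} {r s : ℝ}
    (h : CrossesInfinitelyOften y N r s) (hNM : (N \ M).Finite) :
    CrossesInfinitelyOften y M r s :=
  ⟨(h.1.sdiff hNM).mono fun _ hn => ⟨not_not.1 fun hnM => hn.2 ⟨hn.1.1, hnM⟩, hn.1.2⟩,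
    (h.2.sdiff hNM).mono fun _ hn => ⟨not_not.1 fun hnM => hn.2 ⟨hn.1.1, hnM⟩, hn.1.2⟩⟩

lemma CrossesInfinitelyOften.of_comp {y : ℕ → ℝ} {φ : ℕ → ℕ} (hφ : StrictMono φ) {r s : ℝ}
    (h : CrossesInfinitelyOften (y ∘ φ) univ r s) : CrossesInfinitelyOften y (range φ) r s :=
  ⟨(h.1.image hφ.injective.injOn).mono (image_subset_iff.2 fun n hn => ⟨⟨n, rfl⟩, hn.2⟩),
    (h.2.image hφ.injective.injOn).mono (image_subset_iff.2 fun n hn => ⟨⟨n, rfl⟩, hn.2⟩)⟩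

lemma exists_tendsto_of_forall_not_crossesInfinitelyOften {y : ℕ → ℝ} {C : ℝ}
    (hC : ∀ n, |y n| ≤ C) (h : ∀ r s : ℚ, (r : ℝ) < s → ¬ CrossesInfinitelyOften y univ r s) :
    ∃ L, Tendsto y atTop (𝓝 L) := by
  have hle : IsBoundedUnder (· ≤ ·) atTop y := isBoundedUnder_of ⟨C, fun n => (abs_le.1 (hC n)).2⟩
  have hge : IsBoundedUnder (· ≥ ·) atTop y := isBoundedUnder_of ⟨-C, fun n => (abs_le.1 (hC n)).1⟩
  refine ⟨limsup y atTop, tendsto_of_liminf_eq_limsup (le_antisymm (liminf_le_limsup hle hge) ?_)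
    rfl hle hge⟩
  by_contra! hlt
  obtain ⟨r, hr, hrs⟩ := exists_rat_btwn hlt
  obtain ⟨s, hrs, hs⟩ := exists_rat_btwn hrs
  refine h r s hrs ⟨?_, ?_⟩ <;> simp only [mem_univ, true_and] <;>
    rw [← Nat.frequently_atTop_iff_infinite]
  · exact frequently_lt_of_liminf_lt hle.isCoboundedUnder_ge hr
  · exact frequently_lt_of_lt_limsup hge.isCoboundedUnder_le hs

lemma exists_strictMono_forall_finite_diff {Q : ℕ → Set ℕ → Prop}
    (h : ∀ k M, M.Infinite → ∃ N ⊆ M, N.Infinite ∧ Q k N) :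
    ∃ φ : ℕ → ℕ, StrictMono φ ∧ ∀ k, ∃ M, Q k M ∧ (range φ \ M).Finite := by
  choose! N hNM hNinf hQ using h
  let S : ℕ → Set ℕ := fun k => Nat.rec univ (fun k M => N k M) k
  have hS : ∀ k, (S k).Infinite := fun k => by
    induction k with
    | zero => exact infinite_univ
    | succ k ih => exact hNinf k _ ih
  have hanti : Antitone S := antitone_nat_of_succ_le fun k => hNM k _ (hS k)
  obtain ⟨φ, hφ, hφS⟩ := extraction_forall_of_frequently (P := fun n m => m ∈ S (n + 1))
    fun n => Nat.frequently_atTop_iff_infinite.2 (hS (n + 1))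
  refine ⟨φ, hφ, fun k => ⟨S (k + 1), hQ k _ (hS k), ((finite_lt_nat k).image φ).subset ?_⟩⟩
  rintro _ ⟨⟨n, rfl⟩, hn⟩
  exact ⟨n, not_le.1 fun hkn => hn (hanti (Nat.succ_le_succ hkn) (hφS n)), rfl⟩

section Rosenthal

variable {E : Type*} [NormedAddCommGroup E] [NormedSpace ℝ E]

lemma isL1Sequence_of_forall_separates {w : ℕ → E} {C r s : ℝ} (hC : ∀ n, ‖w n‖ ≤ C)
    (hrs : r < s) (h : ∀ (P : Set ℕ) (t : Finset ℕ), ∃ g : E →L[ℝ] ℝ, ‖g‖ ≤ 1 ∧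
      ∀ i ∈ t, (i ∈ P → s < g (w i)) ∧ (i ∉ P → g (w i) < r)) :
    IsL1Sequence w := by
  refine ⟨(s - r) / 2, C, by linarith, fun t lam => ⟨?_, ?_⟩⟩
  · obtain ⟨g₁, hg₁, h₁⟩ := h {i | 0 ≤ lam i} t
    obtain ⟨g₂, hg₂, h₂⟩ := h {i | lam i < 0} t
    have hterm : ∀ i ∈ t, (s - r) * |lam i| ≤ (g₁ - g₂) (lam i • w i) := by
      intro i hi
      obtain ⟨h₁p, h₁n⟩ := h₁ i hi
      obtain ⟨h₂p, h₂n⟩ := h₂ i hi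
      simp only [mem_ofPred_eq, not_le, not_lt] at h₁p h₁n h₂p h₂n
      simp only [map_smul, smul_eq_mul, sub_apply]
      rcases le_or_gt 0 (lam i) with hl | hl
      · rw [abs_of_nonneg hl]
        nlinarith [h₁p hl, h₂n hl]
      · rw [abs_of_neg hl]
        nlinarith [h₁n hl, h₂p hl]
    have hsum : (s - r) * ∑ i ∈ t, |lam i| ≤ (g₁ - g₂) (∑ i ∈ t, lam i • w i) := by
      rw [Finset.mul_sum, map_sum]
      exact Finset.sum_le_sum hterm
    have hnorm : ‖g₁ - g₂‖ ≤ 2 := (norm_sub_le _ _).trans (by linarith)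
    have := (le_abs_self _).trans ((g₁ - g₂).le_opNorm (∑ i ∈ t, lam i • w i))
    nlinarith [norm_nonneg (∑ i ∈ t, lam i • w i)]
  · calc ‖∑ i ∈ t, lam i • w i‖ ≤ ∑ i ∈ t, ‖lam i • w i‖ := norm_sum_le _ _
      _ ≤ ∑ i ∈ t, C * |lam i| := Finset.sum_le_sum fun i _ => by
        rw [norm_smul, Real.norm_eq_abs, mul_comm]
        exact mul_le_mul_of_nonneg_right (hC i) (abs_nonneg _)
      _ = C * ∑ i ∈ t, |lam i| := (Finset.mul_sum _ _ _).symm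

def Alternates (x : ℕ → E) (r s : ℝ) (F : Finset ℕ) : Prop :=
  ∃ g : E →L[ℝ] ℝ, ‖g‖ ≤ 1 ∧
    ∀ a ∈ F, if Even #{b ∈ F | b < a} then g (x a) < r else s < g (x a)

lemma isL1Sequence_of_alternates {x : ℕ → E} {C r s : ℝ} (hC : ∀ n, ‖x n‖ ≤ C) (hrs : r < s)
    {u : ℕ → ℕ} (hu : StrictMono u) (h : ∀ F : Finset ℕ, ↑F ⊆ range u → Alternates x r s F) :
    IsL1Sequence fun i => x (u (2 * i + 1)) := by
  refine isL1Sequence_of_forall_separates (fun i => hC _) hrs fun P t => ?_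
  obtain ⟨F, hFu, hF⟩ := exists_finset_even_card_filter_lt_iff hu (· ∉ P) (t.sup id + 1)
  obtain ⟨g, hg, hgF⟩ := h F (hFu.trans (image_subset_range _ _))
  refine ⟨g, hg, fun i hi => ?_⟩
  obtain ⟨hiF, hpar⟩ := hF i (Nat.lt_succ_of_le (Finset.le_sup (f := id) hi))
  have := hgF _ hiF
  by_cases hiP : i ∈ P
  · rw [if_neg fun he => hpar.1 he hiP] at this
    exact ⟨fun _ => this, fun h => absurd hiP h⟩
  · rw [if_pos (hpar.2 hiP)] at this
    exact ⟨fun h => absurd h hiP, fun _ => this⟩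

open NashWilliams in
lemma not_crossesInfinitelyOften_of_forall_hasInitialSegmentIn {x : ℕ → E} {r s : ℝ}
    {M : Set ℕ} (hM : ∀ N ⊆ M, N.Infinite → HasInitialSegmentIn (¬ Alternates x r s ·) N)
    {g : E →L[ℝ] ℝ} (hg : ‖g‖ ≤ 1) : ¬ CrossesInfinitelyOften (fun n => g (x n)) M r s := by
  rintro ⟨hlow, hhigh⟩
  obtain ⟨v, hv, hvM⟩ := extraction_forall_of_frequently
    (P := fun i n => n ∈ M ∧ if Even i then g (x n) < r else s < g (x n)) fun i => by
      rw [Nat.frequently_atTop_iff_infinite]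
      by_cases hi : Even i <;> simpa [hi]
  obtain ⟨F, hF, hbad⟩ := hM (range v) (range_subset_iff.2 fun i => (hvM i).1)
    (infinite_range_of_injective hv.injective)
  refine hbad ⟨g, hg, fun a ha => ?_⟩
  obtain ⟨i, rfl⟩ := hF.1 ha
  rw [hF.card_filter_lt hv ha]
  exact (hvM i).2

open NashWilliams in
lemma exists_infinite_forall_not_crossesInfinitelyOften (hE : ¬ ∃ w : ℕ → E, IsL1Sequence w)
    {x : ℕ → E} {C : ℝ} (hC : ∀ n, ‖x n‖ ≤ C) {r s : ℝ} (hrs : r < s) {M : Set ℕ}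
    (hM : M.Infinite) : ∃ M' ⊆ M, M'.Infinite ∧
      ∀ g : E →L[ℝ] ℝ, ‖g‖ ≤ 1 → ¬ CrossesInfinitelyOften (fun n => g (x n)) M' r s := by
  obtain ⟨M₁, hM₁, hM₁inf, hbad | hgood⟩ :=
    exists_infinite_forall_or_forall_not (¬ Alternates x r s ·) hM
  · exact ⟨M₁, hM₁, hM₁inf, fun _ hg =>
      not_crossesInfinitelyOften_of_forall_hasInitialSegmentIn hbad hg⟩
  refine absurd ⟨_, isL1Sequence_of_alternates hC hrs (Nat.nth_strictMono hM₁inf) fun F hF => ?_⟩ hE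
  rw [Nat.range_nth_of_infinite hM₁inf] at hF
  obtain ⟨N, hN, hNinf, hFN⟩ := exists_infinite_isInitialSegment hF hM₁inf
  by_contra hF'
  exact hgood N hN hNinf ⟨F, hFN, hF'⟩

lemma weaklyCauchy_of_forall_norm_le_one {x : ℕ → E}
    (h : ∀ g : E →L[ℝ] ℝ, ‖g‖ ≤ 1 → ∃ L, Tendsto (fun n => g (x n)) atTop (𝓝 L)) :
    WeaklyCauchy x := by
  intro g
  have hc : 0 < ‖g‖ + 1 := by positivity
  obtain ⟨L, hL⟩ := h ((‖g‖ + 1)⁻¹ • g) (by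
    rw [norm_smul, norm_inv, Real.norm_of_nonneg hc.le, inv_mul_le_one₀ hc]
    linarith)
  refine ⟨(‖g‖ + 1) * L, ?_⟩
  convert hL.const_mul (‖g‖ + 1) using 2 with n
  simp [hc.ne']

theorem exists_weaklyCauchy_subseq (hE : ¬ ∃ w : ℕ → E, IsL1Sequence w) {x : ℕ → E} {C : ℝ}
    (hC : ∀ n, ‖x n‖ ≤ C) : ∃ φ, StrictMono φ ∧ WeaklyCauchy (x ∘ φ) := by
  obtain ⟨e, he⟩ := exists_surjective_nat (ℚ × ℚ)
  obtain ⟨φ, hφ, hφM⟩ := exists_strictMono_forall_finite_diff (Q := fun k M =>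
    ((e k).1 : ℝ) < (e k).2 → ∀ g : E →L[ℝ] ℝ, ‖g‖ ≤ 1 →
      ¬ CrossesInfinitelyOften (fun n => g (x n)) M (e k).1 (e k).2) fun k M hM => by
    by_cases hrs : ((e k).1 : ℝ) < (e k).2
    · obtain ⟨M', hM', hM'inf, h⟩ :=
        exists_infinite_forall_not_crossesInfinitelyOften hE hC hrs hM
      exact ⟨M', hM', hM'inf, fun _ => h⟩
    · exact ⟨M, subset_rfl, hM, fun h => absurd h hrs⟩
  refine ⟨φ, hφ, weaklyCauchy_of_forall_norm_le_one fun g hg =>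
    exists_tendsto_of_forall_not_crossesInfinitelyOften (C := C) (fun n => ?_)
      fun r s hrs hcross => ?_⟩
  · exact (g.le_opNorm _).trans ((mul_le_of_le_one_left (norm_nonneg _) hg).trans (hC _))
  · obtain ⟨k, hk⟩ := he (r, s)
    obtain ⟨M, hM, hfin⟩ := hφM k
    rw [hk] at hM
    exact hM hrs g hg ((hcross.of_comp (y := fun n => g (x n)) hφ).mono hfin)

theorem Bornology.IsBounded.weaklyPrecompact (hE : ¬ ∃ w : ℕ → E, IsL1Sequence w) {K : Set E}
    (hK : Bornology.IsBounded K) : WeaklyPrecompact K := by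
  obtain ⟨C, hC⟩ := isBounded_iff_forall_norm_le.1 hK
  exact fun x hx => exists_weaklyCauchy_subseq hE fun n => hC _ (hx n)

end Rosenthal

lemma totallyBounded_of_forall_exists_cauchySeq {X : Type*} [UniformSpace X] {s : Set X}
    (h : ∀ u : ℕ → X, (∀ n, u n ∈ s) → ∃ φ : ℕ → ℕ, StrictMono φ ∧ CauchySeq (u ∘ φ)) :
    TotallyBounded s := by
  intro V hV
  by_contra! hs
  obtain ⟨u, hus, hu⟩ : ∃ u : ℕ → X, (∀ n, u n ∈ s) ∧
      ∀ n m, m < n → u m ∉ UniformSpace.ball (u n) V := by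
    simp only [not_subset, mem_iUnion₂, not_exists, exists_prop] at hs
    simpa only [forall_and, forall_mem_image, not_and] using! seq_of_forall_finite_exists hs
  obtain ⟨φ, hφ, hcauchy⟩ := h u hus
  obtain ⟨N, hN⟩ := hcauchy.mem_entourage hV
  exact hu (φ (N + 1)) (φ N) (hφ (Nat.lt_add_one N)) (hN (N + 1) N N.le_succ le_rfl)

section WeakSequences

variable {E : Type*} [NormedAddCommGroup E] [NormedSpace ℝ E]

lemma WeaklyNull.comp_tendsto {x : ℕ → E} (hx : WeaklyNull x) {m : ℕ → ℕ}
    (hm : Tendsto m atTop atTop) : WeaklyNull (x ∘ m) :=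
  fun g => (hx g).comp hm

lemma WeaklyNull.weaklyCauchy {x : ℕ → E} (hx : WeaklyNull x) : WeaklyCauchy x :=
  fun g => ⟨0, hx g⟩

lemma WeaklyCauchy.weaklyNull_sub {x : ℕ → E} (hx : WeaklyCauchy x) {m l : ℕ → ℕ}
    (hm : Tendsto m atTop atTop) (hl : Tendsto l atTop atTop) :
    WeaklyNull fun i => x (m i) - x (l i) := by
  intro g
  obtain ⟨L, hL⟩ := hx g
  simpa using (hL.comp hm).sub (hL.comp hl)

lemma WeaklyNull.weaklyPrecompact_range {x : ℕ → E} (hx : WeaklyNull x) :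
    WeaklyPrecompact (range x) := by
  intro z hz
  choose m hm using hz
  obtain rfl : z = x ∘ m := funext fun n => (hm n).symm
  by_cases hm_top : Tendsto m atTop atTop
  · exact ⟨id, strictMono_id, (hx.comp_tendsto hm_top).weaklyCauchy⟩
  obtain ⟨b, hb⟩ : ∃ b, ∃ᶠ n in atTop, m n < b := by
    simpa [tendsto_atTop, frequently_atTop] using hm_top
  obtain ⟨v, hv⟩ : ∃ v : Fin b, ∃ᶠ n in atTop, m n = v :=
    frequently_exists.1 (hb.mono fun n hn => ⟨⟨m n, hn⟩, rfl⟩)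
  obtain ⟨φ, hφ, hφv⟩ := extraction_of_frequently_atTop hv
  exact ⟨φ, hφ, fun g => ⟨g (x v), by simp [Function.comp_def, hφv]⟩⟩

lemma LSet.exists_forall_abs_sub_lt {K : Set (E →L[ℝ] ℝ)} (hK : LSet K) {y : ℕ → E}
    (hy : WeaklyCauchy y) {ε : ℝ} (hε : 0 < ε) :
    ∃ N, ∀ j ≥ N, ∀ l ≥ N, ∀ g ∈ K, |g (y j - y l)| < ε := by
  by_contra! h
  choose j hj l hl g hgK hg using h
  obtain ⟨N, hN⟩ := hK _ (hy.weaklyNull_sub (tendsto_atTop_mono hj tendsto_id)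
    (tendsto_atTop_mono hl tendsto_id)) ε hε
  exact (hN N le_rfl _ (hgK N)).not_ge (hg N)

variable {F : Type*} [NormedAddCommGroup F] [NormedSpace ℝ F]

lemma CompletelyContinuous.cauchySeq_comp {T : E →L[ℝ] F} (hT : CompletelyContinuous T)
    {x : ℕ → E} (hx : WeaklyCauchy x) : CauchySeq (T ∘ x) := by
  rw [cauchySeq_iff_tendsto_dist_atTop_0, tendsto_iff_seq_tendsto]
  intro p hp
  rw [← prod_atTop_atTop_eq] at hp
  simpa [Function.comp_def, dist_eq_norm] using
    hT _ (hx.weaklyNull_sub (tendsto_fst.comp hp) (tendsto_snd.comp hp))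

theorem CompletelyContinuous.isCompactOperator [CompleteSpace F] {T : E →L[ℝ] F}
    (hT : CompletelyContinuous T) (hE : WeaklyPrecompact (Metric.closedBall (0 : E) 1)) :
    IsCompactOperator T := by
  refine (isCompactOperator_iff_isCompact_closure_image_closedBall (T : E →ₗ[ℝ] F) one_pos).2 ?_
  refine (totallyBounded_of_forall_exists_cauchySeq fun u hu => ?_).closure.isCompact_of_isClosed
    isClosed_closure
  choose a ha hau using hu
  obtain ⟨φ, hφ, hcauchy⟩ := hE a ha
  exact ⟨φ, hφ, by simpa [Function.comp_def, ← hau] using hT.cauchySeq_comp hcauchy⟩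

end WeakSequences

section MultiplicationOperator

variable {A : Type*} [NormedRing A] [NormedAlgebra ℝ A] (f : A →L[ℝ] ℝ)

noncomputable def TfCLM : A →L[ℝ] A →L[ℝ] ℝ :=
  (ContinuousLinearMap.compL ℝ A A ℝ f).comp (ContinuousLinearMap.mul ℝ A)

lemma coe_TfCLM : ⇑(TfCLM f) = Tf f := rfl

lemma tendsto_Tf_apply_of_lSet {X Y : ℕ → A} (hK : LSet (Tf f '' range X)) (hX : WeaklyNull X)
    (hY : WeaklyCauchy Y) : Tendsto (fun k => Tf f (X k) (Y k)) atTop (𝓝 0) := by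
  rw [Metric.tendsto_atTop]
  intro ε hε
  obtain ⟨N, hN⟩ := hK.exists_forall_abs_sub_lt hY (half_pos hε)
  obtain ⟨K, hK⟩ := eventually_atTop.1 (Metric.tendsto_nhds.1 (hX (Sf f (Y N))) _ (half_pos hε))
  refine ⟨max N K, fun k hk => ?_⟩
  have hsplit : Tf f (X k) (Y k) = Tf f (X k) (Y k - Y N) + Sf f (Y N) (X k) := by
    simp [Tf, Sf, mul_sub]
  have h₁ := hN k (le_of_max_le_left hk) N le_rfl _ ⟨X k, mem_range_self k, rfl⟩
  have h₂ := hK k (le_of_max_le_right hk)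
  rw [Real.dist_eq, sub_zero] at h₂ ⊢
  calc |Tf f (X k) (Y k)| ≤ |Tf f (X k) (Y k - Y N)| + |Sf f (Y N) (X k)| :=
        hsplit ▸ abs_add_le _ _
    _ < ε / 2 + ε / 2 := add_lt_add h₁ h₂
    _ = ε := add_halves ε

theorem completelyContinuous_Tf (hball : WeaklyPrecompact (Metric.closedBall (0 : A) 1))
    (hf : ∀ K : Set A, WeaklyPrecompact K → LSet (Tf f '' K)) : CompletelyContinuous (Tf f) := by
  intro x hx
  by_contra h
  obtain ⟨ε, hε, hfreq⟩ : ∃ ε > 0, ∃ᶠ n in atTop, ε ≤ ‖Tf f (x n)‖ := by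
    simpa [Metric.tendsto_atTop, frequently_atTop] using h
  obtain ⟨ψ, hψ, hψε⟩ := extraction_of_frequently_atTop hfreq
  have hnorming : ∀ k, ∃ y ∈ Metric.closedBall (0 : A) 1, ε / 2 < |Tf f (x (ψ k)) y| := fun k => by
    obtain ⟨y, hy, hyε⟩ := (Tf f (x (ψ k))).exists_lt_apply_of_lt_opNorm
      ((half_lt_self hε).trans_le (hψε k))
    exact ⟨y, mem_closedBall_zero_iff.2 hy.le, hyε⟩
  choose y hy hyε using hnorming
  obtain ⟨φ, hφ, hyφ⟩ := hball y hy
  have hX : WeaklyNull (x ∘ ψ ∘ φ) := hx.comp_tendsto (hψ.comp hφ).tendsto_atTop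
  obtain ⟨k, hk⟩ := (Metric.tendsto_nhds.1 (tendsto_Tf_apply_of_lSet f
    (hf _ hX.weaklyPrecompact_range) hX hyφ) _ (half_pos hε)).exists
  rw [Real.dist_eq, sub_zero] at hk
  exact (hyε (φ k)).not_gt hk

end MultiplicationOperator

theorem tf_compact_of_no_l1_general {A : Type*} [NormedRing A] [NormedAlgebra ℝ A]
    (hA : ¬ ∃ w : ℕ → A, IsL1Sequence w) (f : A →L[ℝ] ℝ)
    (hf : ∀ K : Set A, WeaklyPrecompact K → LSet (Tf f '' K)) :
    IsCompactOperator (Tf f) := by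
  have hball : WeaklyPrecompact (Metric.closedBall (0 : A) 1) :=
    Metric.isBounded_closedBall.weaklyPrecompact hA
  rw [← coe_TfCLM]
  exact CompletelyContinuous.isCompactOperator (completelyContinuous_Tf f hball hf) hball

theorem tf_compact_of_no_l1 {A : Type*} [NormedRing A] [NormedAlgebra ℝ A] [CompleteSpace A]
    (hA : ¬ ∃ w : ℕ → A, IsL1Sequence w) (f : A →L[ℝ] ℝ)
    (hf : ∀ K : Set A, WeaklyPrecompact K → LSet (Tf f '' K)) :
    IsCompactOperator (Tf f) :=
  tf_compact_of_no_l1_general hA f hf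
end

section
/- Let X be a Banach space and A = K(X). If for every f ∈ A*, every weakly null sequence (x_n) and every bounded sequence (y_n) in K(X), f(x_n y_n) → 0, then X* has the Schur property. -/
open Filter Topology ENNReal

variable (X : Type*) [NormedAddCommGroup X] [NormedSpace ℝ X]

/-- The space `K(X)` of compact operators on `X`, as a submodule of `X →L[ℝ] X`. -/
noncomputable abbrev KX : Submodule ℝ (X →L[ℝ] X) :=
  compactOperator (RingHom.id ℝ) X X

/-- Multiplication (composition) in `K(X)`. -/
noncomputable def Kmul {X : Type*} [NormedAddCommGroup X] [NormedSpace ℝ X]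
    (a b : KX X) : KX X :=
  ⟨(a : X →L[ℝ] X).comp (b : X →L[ℝ] X), by
    exact a.2.comp_clm (b : X →L[ℝ] X)⟩

/-- Right multiplication by `a` in `K(X)` as a continuous linear map. -/
noncomputable def KmulRight {X : Type*} [NormedAddCommGroup X] [NormedSpace ℝ X]
    (a : KX X) : KX X →L[ℝ] KX X :=
  LinearMap.mkContinuous
    { toFun := fun b => Kmul b a
      map_add' := by
        intro b c
        apply Subtype.ext
        simp [Kmul, ContinuousLinearMap.add_comp]
      map_smul' := by
        intro r b
        apply Subtype.ext
        simp [Kmul, ContinuousLinearMap.smul_comp] }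
    ‖(a : X →L[ℝ] X)‖
    (by
      intro b
      calc ‖Kmul b a‖ = ‖(b : X →L[ℝ] X).comp (a : X →L[ℝ] X)‖ := rfl
        _ ≤ ‖(b : X →L[ℝ] X)‖ * ‖(a : X →L[ℝ] X)‖ := ContinuousLinearMap.opNorm_comp_le _ _
        _ = ‖(a : X →L[ℝ] X)‖ * ‖b‖ := by rw [mul_comm]; rfl)

/-- Left multiplication by `a` in `K(X)` as a continuous linear map. -/
noncomputable def KmulLeft {X : Type*} [NormedAddCommGroup X] [NormedSpace ℝ X]
    (a : KX X) : KX X →L[ℝ] KX X :=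
  LinearMap.mkContinuous
    { toFun := fun b => Kmul a b
      map_add' := by
        intro b c
        apply Subtype.ext
        simp [Kmul, ContinuousLinearMap.comp_add]
      map_smul' := by
        intro r b
        apply Subtype.ext
        simp [Kmul, ContinuousLinearMap.comp_smul] }
    ‖(a : X →L[ℝ] X)‖
    (by
      intro b
      calc ‖Kmul a b‖ = ‖(a : X →L[ℝ] X).comp (b : X →L[ℝ] X)‖ := rfl
        _ ≤ ‖(a : X →L[ℝ] X)‖ * ‖(b : X →L[ℝ] X)‖ := ContinuousLinearMap.opNorm_comp_le _ _
        _ = ‖(a : X →L[ℝ] X)‖ * ‖b‖ := rfl)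

/-- The operator `T_f : K(X) → K(X)*`, `(T_f a)(x) = f (a x)` (product = composition). -/
noncomputable def TfK {X : Type*} [NormedAddCommGroup X] [NormedSpace ℝ X]
    (f : KX X →L[ℝ] ℝ) (a : KX X) : KX X →L[ℝ] ℝ :=
  f.comp (KmulLeft a)

/-- The operator `S_f : K(X) → K(X)*`, `(S_f a)(x) = f (x a)`. -/
noncomputable def SfK {X : Type*} [NormedAddCommGroup X] [NormedSpace ℝ X]
    (f : KX X →L[ℝ] ℝ) (a : KX X) : KX X →L[ℝ] ℝ :=
  f.comp (KmulRight a)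

/-! If `dₙ` is weakly null in `X*`, then so is `v ⊗ dₙ` in `K(X)`, and for unit vectors `xₙ`
the product `(v ⊗ dₙ) ∘ (xₙ ⊗ ψ) = dₙ(xₙ) • (v ⊗ ψ)`. The hypothesis applied to a functional not
vanishing on `v ⊗ ψ` gives `dₙ(xₙ) → 0` for every such choice of `xₙ`, hence `‖dₙ‖ → 0`. -/

theorem schurProperty_of_weaklyNull_tendsto {A : Type*} [NormedAddCommGroup A] [NormedSpace ℝ A]
    (h : ∀ x : ℕ → A, WeaklyNull x → Tendsto x atTop (𝓝 0)) : SchurProperty A := by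
  intro x L hx
  refine tendsto_sub_nhds_zero_iff.mp (h _ fun f => ?_)
  simpa using (hx f).sub_const (f L)

theorem ContinuousLinearMap.tendsto_zero_of_forall_tendsto_apply {𝕜 E F : Type*}
    [DenselyNormedField 𝕜] [NormedAddCommGroup E] [NormedSpace 𝕜 E]
    [SeminormedAddCommGroup F] [NormedSpace 𝕜 F] {T : ℕ → E →L[𝕜] F}
    (h : ∀ x : ℕ → E, (∀ n, ‖x n‖ ≤ 1) → Tendsto (fun n => T n (x n)) atTop (𝓝 0)) :
    Tendsto T atTop (𝓝 0) := by
  have hnear (n : ℕ) : ∃ x : E, ‖x‖ < 1 ∧ ‖T n‖ - 1 / ((n : ℝ) + 1) < ‖T n x‖ :=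
    (T n).exists_lt_apply_of_lt_opNorm (sub_lt_self _ Nat.one_div_pos_of_nat)
  choose x hx_norm hx_near using hnear
  refine squeeze_zero_norm (fun n => (sub_lt_iff_lt_add.mp (hx_near n)).le) ?_
  simpa using (h x fun n => (hx_norm n).le).norm.add tendsto_one_div_add_atTop_nhds_zero_nat

section RankOne

variable {X : Type*} [NormedAddCommGroup X] [NormedSpace ℝ X]

/-- `rankOne v g` is the operator `v ⊗ g : y ↦ g y • v`. -/
noncomputable def rankOne (v : X) : (X →L[ℝ] ℝ) →L[ℝ] KX X :=
  ((ContinuousLinearMap.smulRightL ℝ X X).flip v).codRestrict (KX X) fun g =>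
    (isCompactOperator_of_locallyCompactSpace_dom g).clm_comp
      (ContinuousLinearMap.toSpanSingleton ℝ v)

@[simp]
theorem rankOne_apply_apply (v : X) (g : X →L[ℝ] ℝ) (y : X) :
    (rankOne v g : X →L[ℝ] X) y = g y • v :=
  rfl

theorem norm_rankOne (v : X) (g : X →L[ℝ] ℝ) : ‖rankOne v g‖ = ‖g‖ * ‖v‖ :=
  g.norm_smulRight_apply v

theorem Kmul_rankOne_rankOne (v w : X) (g ψ : X →L[ℝ] ℝ) :
    Kmul (rankOne v g) (rankOne w ψ) = g w • rankOne v ψ := by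
  ext y
  simp [Kmul, smul_smul, mul_comm]

theorem rankOne_ne_zero {v : X} (hv : v ≠ 0) {g : X →L[ℝ] ℝ} (hg : g v ≠ 0) : rankOne v g ≠ 0 :=
  fun h => smul_ne_zero hg hv (by simpa using congr(($h : X →L[ℝ] X) v))

end RankOne

theorem tendsto_apply_of_weaklyNull {X : Type*} [NormedAddCommGroup X] [NormedSpace ℝ X]
    (h : ∀ f : KX X →L[ℝ] ℝ, ∀ x y : ℕ → KX X, WeaklyNull x →
      (∃ C : ℝ, ∀ n, ‖y n‖ ≤ C) →
      Tendsto (fun n => f (Kmul (x n) (y n))) atTop (𝓝 0))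
    {d : ℕ → X →L[ℝ] ℝ} (hd : WeaklyNull d) {x : ℕ → X} (hx : ∀ n, ‖x n‖ ≤ 1) :
    Tendsto (fun n => d n (x n)) atTop (𝓝 0) := by
  rcases subsingleton_or_nontrivial X with hX | hX
  · simp [Subsingleton.elim _ (0 : X)]
  obtain ⟨v, hv⟩ := exists_ne (0 : X)
  obtain ⟨ψ, -, hψv⟩ := exists_dual_vector ℝ v (norm_ne_zero_iff.mpr hv)
  have hE : rankOne v ψ ≠ 0 := rankOne_ne_zero hv (by rw [hψv]; exact norm_ne_zero_iff.mpr hv)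
  obtain ⟨f, -, hfE⟩ := exists_dual_vector ℝ _ (norm_ne_zero_iff.mpr hE)
  have hleft : WeaklyNull fun n => rankOne v (d n) := fun F => hd (F.comp (rankOne v))
  have hright : ∃ C : ℝ, ∀ n, ‖rankOne (x n) ψ‖ ≤ C :=
    ⟨‖ψ‖, fun n => by rw [norm_rankOne]; exact mul_le_of_le_one_right (norm_nonneg ψ) (hx n)⟩
  have hprod := h f _ _ hleft hright
  simp only [Kmul_rankOne_rankOne, map_smul, hfE, smul_eq_mul] at hprod
  simpa [hE] using hprod.div_const ‖rankOne v ψ‖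

theorem dual_schur_of_tfK_cc
    (h : ∀ f : KX X →L[ℝ] ℝ, ∀ x y : ℕ → KX X, WeaklyNull x →
      (∃ C : ℝ, ∀ n, ‖y n‖ ≤ C) →
      Tendsto (fun n => f (Kmul (x n) (y n))) atTop (𝓝 0)) :
    SchurProperty (X →L[ℝ] ℝ) :=
  schurProperty_of_weaklyNull_tendsto fun _ hd =>
    ContinuousLinearMap.tendsto_zero_of_forall_tendsto_apply fun _ hx =>
      tendsto_apply_of_weaklyNull h hd hx
end
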